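/- Let n ≥ 2 be a natural number, let R be a commutative ring that is a ℚ-algebra, and let c : ℕ → R be a function with c(0) = 1. For each natural number i with 0 ≤ i ≤ n define d(i) = Σ_{j=0}^{i} (-1)^j · binom(n-j, i-j) · c(j) · c(1)^{i-j} in R (where binom denotes the usual binomial coefficient of natural numbers). Then for every i with 1 ≤ i ≤ n, the element c(i) lies in the ℚ-subalgebra of R generated by the elements d(1), d(2), …, d(i). -/

import Mathlib

/-!
Since `d i = (-1)^i c i + (terms in c 0 = 1, c 1, …, c (i-1))`, the system is triangular and
can be solved for `c i` recursively, except at `i = 1`, where the last term `- c 1` merges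
with `n c 1` into `d 1 = (n - 1) c 1`; this is inverted by dividing by `n - 1 ≠ 0`.
-/

open Set

theorem Algebra.mem_adjoin_image_Icc_of_mem_adjoin_insert {K R : Type*} [CommSemiring K]
    [Semiring R] [Algebra K R] (c d : ℕ → R) (N : ℕ)
    (h : ∀ i, 1 ≤ i → i ≤ N → c i ∈ Algebra.adjoin K (insert (d i) (c '' Ico 1 i))) :
    ∀ i, 1 ≤ i → i ≤ N → c i ∈ Algebra.adjoin K (d '' Icc 1 i) := by
  intro i
  induction i using Nat.strong_induction_on with
  | _ i ih =>
    intro hi hiN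
    refine Algebra.adjoin_le (insert_subset_iff.mpr ⟨?_, ?_⟩) (h i hi hiN)
    · exact Algebra.subset_adjoin ⟨i, ⟨hi, le_rfl⟩, rfl⟩
    · rintro _ ⟨j, ⟨hj, hji⟩, rfl⟩
      exact Algebra.adjoin_mono (image_mono (Icc_subset_Icc_right hji.le))
        (ih j hji hj (by omega))

namespace ChernClasses

variable {K R : Type*} [Field K] [CommRing R] [Algebra K R] {n : ℕ} {c d : ℕ → R}

theorem d_one_eq (hc0 : c 0 = 1)
    (hd1 : d 1 = ∑ j ∈ Finset.range 2,
      (-1 : R) ^ j * ((n - j).choose (1 - j) : R) * c j * c 1 ^ (1 - j)) :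
    d 1 = ((n : R) - 1) * c 1 := by
  simp [hd1, Finset.sum_range_succ, hc0]
  ring

theorem c_eq_neg_one_pow_mul_sub {i : ℕ}
    (hdi : d i = ∑ j ∈ Finset.range (i + 1),
      (-1 : R) ^ j * ((n - j).choose (i - j) : R) * c j * c 1 ^ (i - j)) :
    c i = (-1 : R) ^ i * (d i - ∑ j ∈ Finset.range i,
      (-1 : R) ^ j * ((n - j).choose (i - j) : R) * c j * c 1 ^ (i - j)) := by
  have h_sq : (-1 : R) ^ i * (-1) ^ i = 1 := by rw [← mul_pow]; simp
  rw [hdi, Finset.sum_range_succ, add_sub_cancel_left, Nat.sub_self, Nat.choose_zero_right]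
  linear_combination (-c i) * h_sq

variable (hc0 : c 0 = 1) (hd : ∀ i, i ≤ n →
      d i = ∑ j ∈ Finset.range (i + 1),
        (-1 : R) ^ j * ((n - j).choose (i - j) : R) * c j * c 1 ^ (i - j))
include hc0 hd

theorem c_one_eq_smul_d_one (h1n : 1 ≤ n) (hn : (n : K) ≠ 1) :
    c 1 = ((n : K) - 1)⁻¹ • d 1 := by
  have hn1 : (n : K) - 1 ≠ 0 := sub_ne_zero.mpr hn
  have h_cast : (n : R) - 1 = algebraMap K R ((n : K) - 1) := by simp
  rw [d_one_eq hc0 (hd 1 h1n), h_cast, ← smul_mul_assoc, Algebra.smul_def, ← map_mul,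
    inv_mul_cancel₀ hn1, map_one, one_mul]

theorem c_mem_adjoin_insert (hn : (n : K) ≠ 1) {i : ℕ} (hi : 1 ≤ i) (hin : i ≤ n) :
    c i ∈ Algebra.adjoin K (insert (d i) (c '' Ico 1 i)) := by
  set S := Algebra.adjoin K (insert (d i) (c '' Ico 1 i))
  have hdi : d i ∈ S := Algebra.subset_adjoin (mem_insert _ _)
  obtain rfl | h2i := hi.eq_or_lt
  · rw [c_one_eq_smul_d_one hc0 hd hin hn]
    exact S.smul_mem hdi _
  have hc : ∀ j < i, c j ∈ S := by
    intro j hji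
    obtain rfl | hj := j.eq_zero_or_pos
    · exact hc0 ▸ S.one_mem
    · exact Algebra.subset_adjoin (mem_insert_of_mem _ ⟨j, ⟨hj, hji⟩, rfl⟩)
  have hc1 := hc 1 h2i
  rw [c_eq_neg_one_pow_mul_sub (hd i hin)]
  refine S.mul_mem (S.pow_mem (S.neg_mem S.one_mem) i)
    (S.sub_mem hdi (S.sum_mem fun j hj => ?_))
  exact S.mul_mem (S.mul_mem (S.mul_mem (S.pow_mem (S.neg_mem S.one_mem) j)
    (S.natCast_mem _)) (hc j (Finset.mem_range.mp hj))) (S.pow_mem hc1 _)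

end ChernClasses

/-- Inductive algebraic heart of Lemma 3.2: in a commutative `ℚ`-algebra `R`,
given `c : ℕ → R` with `c 0 = 1`, setting
`d i = ∑_{j=0}^{i} (-1)^j * binom(n-j, i-j) * c j * (c 1)^(i-j)`,
each `c i` (for `1 ≤ i ≤ n`) lies in the `ℚ`-subalgebra of `R` generated by
`d 1, …, d i`. -/
theorem stmt2 (n : ℕ) (hn : 2 ≤ n) (R : Type*) [CommRing R] [Algebra ℚ R]
    (c d : ℕ → R) (hc0 : c 0 = 1)
    (hd : ∀ i, i ≤ n →
      d i = ∑ j ∈ Finset.range (i + 1),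
        (-1 : R) ^ j * ((n - j).choose (i - j) : R) * c j * c 1 ^ (i - j)) :
    ∀ i, 1 ≤ i → i ≤ n → c i ∈ Algebra.adjoin ℚ (d '' Set.Icc 1 i) := by
  have hn_ne_one : (n : ℚ) ≠ 1 := by exact_mod_cast (show n ≠ 1 by omega)
  exact Algebra.mem_adjoin_image_Icc_of_mem_adjoin_insert c d n
    fun i hi hin => ChernClasses.c_mem_adjoin_insert hc0 hd hn_ne_one hi hin
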